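/- arXiv:1610.05988 — 2 statements merged into one kernel-verified Lean document; each statement's English description precedes it below -/
import Mathlib

section
/- Let P(λ) = Σ_{i=0}^k P_i λ^i with P_i ∈ ℝ^{n×n} be a matrix polynomial of degree k ≥ 2, let v ∈ ℝ^k, and let L(λ) be a kn × kn matrix pencil. Then L(λ)·(Λ_{k−1}(λ) ⊗ I_n) = v ⊗ P(λ) holds identically if and only if there exists a matrix Z ∈ ℝ^{kn × (k−1)n} such that L(λ) = [v ⊗ I_n, Z] · Frob_P(λ), where [v ⊗ I_n, Z] denotes the kn × kn matrix obtained by placing Z to the right of the kn × n matrix v ⊗ I_n. -/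
/-!
The pencil identity `Frob_P(λ) (Λ_{k-1}(λ) ⊗ I_n) = e₁ ⊗ P(λ)` shows at once that every pencil
`[v ⊗ I_n, Z] · Frob_P` satisfies `L(λ) (Λ_{k-1}(λ) ⊗ I_n) = v ⊗ P(λ)`.
Conversely, since `Frob_P` has leading coefficient `diag(P_k, I_n, …, I_n)`, taking for `Z` the last
`k - 1` block columns of the leading coefficient of `L` makes the leading coefficients of `L` and
`[v ⊗ I_n, Z] · Frob_P` agree outside the first block column. Their difference `M` then satisfies
`M(λ) (Λ_{k-1}(λ) ⊗ I_n) = 0`; comparing the coefficient of `λ^k` kills the rest of its leading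
coefficient and then the coefficients of `λ^{k-1}, …, 1` kill its constant coefficient.
-/

open Matrix Polynomial
open scoped Kronecker

noncomputable section

/-- `Λ_j(λ)` as a `(j+1) × 1` matrix of real polynomials, with `i`-th entry `λ^{j-i}`. -/
def Lam (j : ℕ) : Matrix (Fin (j + 1)) (Fin 1) (Polynomial ℝ) :=
  Matrix.of fun i _ => X ^ (j - (i : ℕ))

/-- `L_κ(λ)`, the `κ × (κ+1)` pencil with `-1` on the diagonal and `λ` on the superdiagonal. -/
def Lk (κ : ℕ) : Matrix (Fin κ) (Fin (κ + 1)) (Polynomial ℝ) :=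
  Matrix.of fun i j => if (j : ℕ) = (i : ℕ) then -1 else if (j : ℕ) = (i : ℕ) + 1 then X else 0

/-- The matrix pencil `λ·A + B` as a matrix of real polynomials. -/
def pencilM {ρ γ : Type*} (A B : Matrix ρ γ ℝ) : Matrix ρ γ (Polynomial ℝ) :=
  Matrix.of fun i j => X * C (A i j) + C (B i j)

/-- The matrix polynomial `Σ_{i=0}^k Pc i · λ^i` as a matrix of real polynomials. -/
def polyOf (m n k : ℕ) (Pc : ℕ → Matrix (Fin m) (Fin n) ℝ) :
    Matrix (Fin m) (Fin n) (Polynomial ℝ) :=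
  Matrix.of fun i j => ∑ t ∈ Finset.range (k + 1), X ^ t * C (Pc t i j)

/-- `Λ_{k-1}(λ) ⊗ I_n` as a flat `kn × n` matrix of polynomials. -/
def LamI (n k : ℕ) : Matrix (Fin k × Fin n) (Fin 1 × Fin n) (Polynomial ℝ) :=
  Matrix.of fun p q => if p.2 = q.2 then X ^ (k - 1 - (p.1 : ℕ)) else 0

/-- `Λ_{k-1}(λ)ᵀ ⊗ I_n` as a flat `n × kn` matrix of polynomials. -/
def LamIT (n k : ℕ) : Matrix (Fin 1 × Fin n) (Fin k × Fin n) (Polynomial ℝ) :=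
  Matrix.of fun p q => if p.2 = q.2 then X ^ (k - 1 - (q.1 : ℕ)) else 0

/-- The Frobenius companion pencil `Frob_P(λ)` of the matrix polynomial with coefficients
`Pc` of degree `k`. -/
def FrobP (n k : ℕ) (Pc : ℕ → Matrix (Fin n) (Fin n) ℝ) :
    Matrix (Fin k × Fin n) (Fin k × Fin n) (Polynomial ℝ) :=
  Matrix.of fun p q =>
    (if (p.1 : ℕ) = 0 ∧ (q.1 : ℕ) = 0 then X * C (Pc k p.2 q.2)
     else if p.1 = q.1 ∧ p.2 = q.2 then X else 0)
    +
    (if (p.1 : ℕ) = 0 then C (Pc (k - 1 - (q.1 : ℕ)) p.2 q.2)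
     else if (p.1 : ℕ) = (q.1 : ℕ) + 1 ∧ p.2 = q.2 then -1 else 0)

/-- The constant `kn × kn` matrix `[v ⊗ I_n, Z]`. -/
def vZmat (n k : ℕ) (v : Fin k → ℝ)
    (Z : Matrix (Fin k × Fin n) (Fin (k - 1) × Fin n) ℝ) :
    Matrix (Fin k × Fin n) (Fin k × Fin n) ℝ :=
  Matrix.of fun p q =>
    if (q.1 : ℕ) = 0 then (if p.2 = q.2 then v p.1 else 0)
    else if h : (q.1 : ℕ) - 1 < k - 1 then Z p (⟨(q.1 : ℕ) - 1, h⟩, q.2) else 0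

section Pencil

variable {ρ γ δ : Type*}

lemma pencilM_sub (A B A' B' : Matrix ρ γ ℝ) :
    pencilM A B - pencilM A' B' = pencilM (A - A') (B - B') := by
  ext i j : 1
  simp only [pencilM, Matrix.sub_apply, of_apply, C_sub]
  ring

lemma map_C_mul_pencilM [Fintype γ] (W : Matrix ρ γ ℝ) (A B : Matrix γ δ ℝ) :
    W.map C * pencilM A B = pencilM (W * A) (W * B) := by
  ext i j : 1
  simp only [pencilM, mul_apply, map_apply, of_apply, map_sum, C_mul, Finset.mul_sum,
    ← Finset.sum_add_distrib]
  exact Finset.sum_congr rfl fun _ _ => by ring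

end Pencil

/-- The leading coefficient `diag(P_k, I_n, …, I_n)` of `Frob_P`. -/
def frobLead (n k : ℕ) (Pc : ℕ → Matrix (Fin n) (Fin n) ℝ) :
    Matrix (Fin k × Fin n) (Fin k × Fin n) ℝ :=
  Matrix.of fun p q =>
    if (p.1 : ℕ) = 0 ∧ (q.1 : ℕ) = 0 then Pc k p.2 q.2 else if p = q then 1 else 0

/-- The constant coefficient `Y₀` of `Frob_P`. -/
def frobTrail (n k : ℕ) (Pc : ℕ → Matrix (Fin n) (Fin n) ℝ) :
    Matrix (Fin k × Fin n) (Fin k × Fin n) ℝ :=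
  Matrix.of fun p q =>
    if (p.1 : ℕ) = 0 then Pc (k - 1 - (q.1 : ℕ)) p.2 q.2
    else if (p.1 : ℕ) = (q.1 : ℕ) + 1 ∧ p.2 = q.2 then -1 else 0

lemma FrobP_eq_pencilM (n k : ℕ) (Pc : ℕ → Matrix (Fin n) (Fin n) ℝ) :
    FrobP n k Pc = pencilM (frobLead n k Pc) (frobTrail n k Pc) := by
  ext p q : 1
  simp only [FrobP, pencilM, frobLead, frobTrail, of_apply, Prod.ext_iff]
  split_ifs <;> simp_all

lemma mul_frobLead_apply_of_ne_zero {ρ : Type*} {n k : ℕ} (Pc : ℕ → Matrix (Fin n) (Fin n) ℝ)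
    (W : Matrix ρ (Fin k × Fin n) ℝ) (p : ρ) {q : Fin k × Fin n}
    (hq : (q.1 : ℕ) ≠ 0) :
    (W * frobLead n k Pc) p q = W p q := by
  simp [mul_apply, frobLead, hq]

lemma vZmat_apply_of_ne_zero {n k : ℕ} (v : Fin k → ℝ)
    (Z : Matrix (Fin k × Fin n) (Fin (k - 1) × Fin n) ℝ) (p : Fin k × Fin n)
    {q : Fin k × Fin n} (hq : (q.1 : ℕ) ≠ 0) :
    vZmat n k v Z p q = Z p (⟨q.1 - 1, by omega⟩, q.2) := by
  simp only [vZmat, of_apply, if_neg hq]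
  rw [dif_pos (by omega)]

lemma pencilM_mul_LamI_apply {ρ : Type*} {n k : ℕ} (A B : Matrix ρ (Fin k × Fin n) ℝ)
    (p : ρ) (q : Fin 1 × Fin n) :
    (pencilM A B * LamI n k) p q =
      ∑ j : Fin k, (C (A p (j, q.2)) * X ^ (k - j) + C (B p (j, q.2)) * X ^ (k - 1 - j)) := by
  rw [mul_apply, Fintype.sum_prod_type]
  refine Finset.sum_congr rfl fun j _ => ?_
  have hj : k - j = k - 1 - j + 1 := by omega
  simp [pencilM, LamI, hj, pow_succ]
  ring

lemma eq_zero_of_pencilM_mul_LamI_eq_zero {ρ : Type*} {n k : ℕ}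
    (A B : Matrix ρ (Fin k × Fin n) ℝ) (h : pencilM A B * LamI n k = 0)
    (hA : ∀ p q, (q.1 : ℕ) ≠ 0 → A p q = 0) :
    A = 0 ∧ B = 0 := by
  have hcoeff : ∀ p b d, ∑ j : Fin k,
      ((if d = k - j then A p (j, b) else 0) + (if d = k - 1 - j then B p (j, b) else 0)) = 0 := by
    intro p b d
    simpa [pencilM_mul_LamI_apply, finsetSum_coeff, coeff_C_mul_X_pow] using
      congrArg (fun L => (L p (0, b)).coeff d) h
  have hA0 : A = 0 := by
    ext p ⟨j, b⟩ : 1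
    by_cases hj : (j : ℕ) = 0
    · have := hcoeff p b k
      rw [Finset.sum_eq_single j] at this
      · simpa [hj, show k ≠ k - 1 by omega] using this
      · intro j' _ hj'
        rw [Ne, Fin.ext_iff] at hj'
        have hj'0 : (j' : ℕ) ≠ 0 := by omega
        simp [hA p (j', b) hj'0]
        omega
      · simp
    · exact hA p (j, b) hj
  refine ⟨hA0, ?_⟩
  ext p ⟨j, b⟩ : 1
  have := hcoeff p b (k - 1 - j)
  rw [Finset.sum_eq_single j] at this
  · simpa [hA0] using this
  · intro j' _ hj'
    rw [Ne, Fin.ext_iff] at hj'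
    simp only [hA0, Matrix.zero_apply, ite_self, zero_add, ite_eq_right_iff]
    omega
  · simp

lemma FrobP_mul_LamI (n k : ℕ) (Pc : ℕ → Matrix (Fin n) (Fin n) ℝ) :
    FrobP n k Pc * LamI n k =
      Matrix.of fun p q => if (p.1 : ℕ) = 0 then polyOf n n k Pc p.2 q.2 else 0 := by
  ext ⟨i, a⟩ ⟨_, b⟩ : 1
  have hk : 0 < k := i.pos
  rw [FrobP_eq_pencilM, pencilM_mul_LamI_apply, of_apply, Finset.sum_add_distrib]
  simp only [frobLead, frobTrail, of_apply, Prod.mk.injEq]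
  split_ifs with hi
  · rw [Finset.sum_eq_single ⟨0, hk⟩, Fin.sum_univ_eq_sum_range
      (fun j => C (Pc (k - 1 - j) a b) * X ^ (k - 1 - j)),
      Finset.sum_range_reflect (fun t => C (Pc t a b) * X ^ t) k]
    · simp only [polyOf, of_apply, hi, Finset.sum_range_succ, X_pow_mul_C]
      simp only [and_self, ↓reduceIte, tsub_zero]
      ring
    · intro j _ hj
      rw [Ne, Fin.ext_iff] at hj
      simp only at hj
      simp [hi, hj, Fin.ext_iff]
      omega
    · simp
  · have hi' : (i : ℕ) - 1 < k := by omega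
    rw [Finset.sum_eq_single i, Finset.sum_eq_single ⟨i - 1, hi'⟩]
    · have hexp : k - 1 - (i - 1) = k - i := by omega
      have hsucc : (i : ℕ) - 1 + 1 = i := by omega
      by_cases hab : a = b <;> simp [hi, hab, hexp, hsucc]
    · intro j _ hj
      rw [Ne, Fin.ext_iff] at hj
      have : (i : ℕ) ≠ j + 1 := by simp only at hj; omega
      simp [this]
    · simp
    · intro j _ hj
      simp [hi, Ne.symm hj]
    · simp

lemma vZmat_map_C_mul_of_firstBlock {n k : ℕ} (v : Fin k → ℝ)
    (Z : Matrix (Fin k × Fin n) (Fin (k - 1) × Fin n) ℝ) (Q : Matrix (Fin n) (Fin n) ℝ[X]) :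
    (vZmat n k v Z).map C *
        (Matrix.of fun p q => if (p.1 : ℕ) = 0 then Q p.2 q.2 else 0 :
          Matrix (Fin k × Fin n) (Fin 1 × Fin n) ℝ[X]) =
      Matrix.of fun p q => C (v p.1) * Q p.2 q.2 := by
  ext ⟨i, a⟩ ⟨_, b⟩ : 1
  rw [mul_apply, Fintype.sum_prod_type, Finset.sum_eq_single ⟨0, i.pos⟩]
  · simp [vZmat, apply_ite C, ite_mul]
  · intro j _ hj
    rw [Ne, Fin.ext_iff] at hj
    simp [hj]
  · simp

theorem stmt17_general (n k : ℕ)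
    (Pc : ℕ → Matrix (Fin n) (Fin n) ℝ)
    (v : Fin k → ℝ)
    (Lx Ly : Matrix (Fin k × Fin n) (Fin k × Fin n) ℝ) :
    pencilM Lx Ly * LamI n k =
        Matrix.of (fun p q => C (v p.1) * polyOf n n k Pc p.2 q.2) ↔
    ∃ Z : Matrix (Fin k × Fin n) (Fin (k - 1) × Fin n) ℝ,
      pencilM Lx Ly = (vZmat n k v Z).map C * FrobP n k Pc := by
  have hFrob : ∀ Z, (vZmat n k v Z).map C * FrobP n k Pc * LamI n k =
      Matrix.of (fun p q => C (v p.1) * polyOf n n k Pc p.2 q.2) := fun Z => by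
    rw [Matrix.mul_assoc, FrobP_mul_LamI, vZmat_map_C_mul_of_firstBlock]
  refine ⟨fun hL => ?_, fun ⟨Z, hZ⟩ => hZ ▸ hFrob Z⟩
  let Z : Matrix (Fin k × Fin n) (Fin (k - 1) × Fin n) ℝ :=
    fun p q => Lx p (⟨q.1 + 1, by omega⟩, q.2)
  refine ⟨Z, ?_⟩
  have hW := hFrob Z
  rw [FrobP_eq_pencilM, map_C_mul_pencilM] at hW ⊢
  obtain ⟨hx, hy⟩ := eq_zero_of_pencilM_mul_LamI_eq_zero
    (Lx - vZmat n k v Z * frobLead n k Pc) (Ly - vZmat n k v Z * frobTrail n k Pc)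
    (by rw [← pencilM_sub, Matrix.sub_mul, hL, hW, sub_self])
    (fun p q hq => by
      rw [Matrix.sub_apply, mul_frobLead_apply_of_ne_zero _ _ _ hq, vZmat_apply_of_ne_zero _ _ _ hq,
        sub_eq_zero]
      exact congrArg (fun j => Lx p (j, q.2)) (Fin.ext (by simp only; omega)))
  rw [sub_eq_zero.1 hx, sub_eq_zero.1 hy]

theorem stmt17 (n k : ℕ) (hk : 2 ≤ k)
    (Pc : ℕ → Matrix (Fin n) (Fin n) ℝ) (hdeg : Pc k ≠ 0)
    (v : Fin k → ℝ)
    (Lx Ly : Matrix (Fin k × Fin n) (Fin k × Fin n) ℝ) :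
    pencilM Lx Ly * LamI n k =
        Matrix.of (fun p q => C (v p.1) * polyOf n n k Pc p.2 q.2) ↔
    ∃ Z : Matrix (Fin k × Fin n) (Fin (k - 1) × Fin n) ℝ,
      pencilM Lx Ly = (vZmat n k v Z).map C * FrobP n k Pc :=
  stmt17_general n k Pc v Lx Ly
end
end

section
/- Let P(λ) = Σ_{i=0}^k P_i λ^i with P_i ∈ ℝ^{n×n} be a matrix polynomial of degree k ≥ 2. Then the intersection ⋂_{η=0}^{k−1} G_{η+1}(P) equals the set of all kn × kn matrix pencils L(λ) for which there exists α ∈ ℝ with both L(λ)·(Λ_{k−1}(λ) ⊗ I_n) = α·(e_1 ⊗ P(λ)) and (Λ_{k−1}(λ)^T ⊗ I_n)·L(λ) = α·(e_1^T ⊗ P(λ)), where e_1 is the first standard basis vector of ℝ^k (i.e. it equals the subset of the double ansatz space DL(P) corresponding to ansatz vectors in the span of e_1). -/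
open Matrix Polynomial
open scoped Kronecker

noncomputable section

/-- The flat `(n + ε'n) × kn` matrix `(Λ_{η'}(λ)ᵀ ⊗ I_n) ⊕ I_{ε'n}` (with `ε' = k - 1 - η'`),
acting on the left in the block Kronecker ansatz equation. -/
def Eleft (n k η' : ℕ) : Matrix (Fin (k - η') × Fin n) (Fin k × Fin n) (Polynomial ℝ) :=
  Matrix.of fun p q =>
    if p.2 = q.2 ∧ (p.1 : ℕ) = 0 ∧ (q.1 : ℕ) ≤ η' then X ^ (η' - (q.1 : ℕ))
    else if p.2 = q.2 ∧ (q.1 : ℕ) = η' + (p.1 : ℕ) then 1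
    else 0

/-- The flat `kn × (n + η'n)` matrix `(Λ_{ε'}(λ) ⊗ I_n) ⊕ I_{η'n}` (with `ε' = k - 1 - η'`),
acting on the right in the block Kronecker ansatz equation. -/
def Eright (n k η' : ℕ) : Matrix (Fin k × Fin n) (Fin (η' + 1) × Fin n) (Polynomial ℝ) :=
  Matrix.of fun p q =>
    if p.2 = q.2 ∧ (q.1 : ℕ) = 0 ∧ (p.1 : ℕ) ≤ k - 1 - η' then X ^ (k - 1 - η' - (p.1 : ℕ))
    else if p.2 = q.2 ∧ (p.1 : ℕ) = (k - 1 - η') + (q.1 : ℕ) then 1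
    else 0

/-- The right-hand side `(α · P(λ)) ⊕ 0` of the block Kronecker ansatz equation. -/
def GRHS (n k η' : ℕ) (α : ℝ) (Pm : Matrix (Fin n) (Fin n) (Polynomial ℝ)) :
    Matrix (Fin (k - η') × Fin n) (Fin (η' + 1) × Fin n) (Polynomial ℝ) :=
  Matrix.of fun p q =>
    if (p.1 : ℕ) = 0 ∧ (q.1 : ℕ) = 0 then C α * Pm p.2 q.2 else 0

/-- Membership of the pencil `λ·p.1 + p.2` in the block Kronecker ansatz space
`G_{η'+1}(P)` for the `n × n` matrix polynomial with coefficients `Pc` of degree `k`. -/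
def memG (n k η' : ℕ) (Pc : ℕ → Matrix (Fin n) (Fin n) ℝ)
    (p : Matrix (Fin k × Fin n) (Fin k × Fin n) ℝ ×
         Matrix (Fin k × Fin n) (Fin k × Fin n) ℝ) : Prop :=
  ∃ α : ℝ,
    Eleft n k η' * pencilM p.1 p.2 * Eright n k η' = GRHS n k η' α (polyOf n n k Pc)

namespace Stmt19Helper
open Finset
open Finset

lemma natDeg_pencil (x y : ℝ) : (X * C x + C y : ℝ[X]).natDegree ≤ 1 := by
  refine (natDegree_add_le _ _).trans ?_
  simp only [natDegree_C, max_le_iff]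
  exact ⟨natDegree_mul_le.trans (by simp), by omega⟩

lemma const_of_X_mul {r s : ℝ[X]} (h : X * r = s) (hs : s.natDegree ≤ 1) :
    r = C (r.coeff 0) := by
  rcases eq_or_ne r 0 with h0 | h0
  · simp [h0]
  · have hd : (X * r).natDegree = 1 + r.natDegree := by
      rw [natDegree_mul X_ne_zero h0, natDegree_X]
    rw [h] at hd
    exact eq_C_of_natDegree_le_zero (by omega)

/-- row partial sum -/
def Rp (f : ℕ → ℕ → ℝ[X]) (i m : ℕ) : ℝ[X] :=
  ∑ j ∈ Finset.range (m + 1), f i j * X ^ (m - j)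

lemma Rp_succ (f : ℕ → ℕ → ℝ[X]) (i m : ℕ) :
    Rp f i (m + 1) = X * Rp f i m + f i (m + 1) := by
  unfold Rp
  rw [Finset.sum_range_succ, Nat.sub_self, pow_zero, mul_one, Finset.mul_sum]
  congr 1
  refine Finset.sum_congr rfl fun j hj => ?_
  have hj' : j ≤ m := by simpa [Nat.lt_succ_iff] using hj
  rw [show m + 1 - j = (m - j) + 1 by omega, pow_succ]
  ring

lemma Rp_coeff_zero (f : ℕ → ℕ → ℝ[X]) (i m : ℕ) :
    (Rp f i m).coeff 0 = (f i m).coeff 0 := by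
  unfold Rp
  rw [finset_sum_coeff, Finset.sum_eq_single m]
  · simp
  · intro j hj hjm
    have hj' : j < m + 1 := Finset.mem_range.mp hj
    rw [coeff_mul_X_pow', if_neg (by omega)]
  · intro h; exact absurd (Finset.self_mem_range_succ m) h

lemma Rp_const {k : ℕ} {f : ℕ → ℕ → ℝ[X]} (hf : ∀ i j, (f i j).natDegree ≤ 1)
    (i : ℕ) (h : Rp f i (k - 1) = 0) :
    ∀ m, m ≤ k - 1 → Rp f i m = C ((f i m).coeff 0) := by
  suffices H : ∀ t m, m + t = k - 1 → Rp f i m = C ((f i m).coeff 0) by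
    intro m hm; exact H (k - 1 - m) m (by omega)
  intro t
  induction t with
  | zero =>
    intro m hm
    simp only [Nat.add_zero] at hm; subst hm
    have h0 : (f i (k - 1)).coeff 0 = 0 := by
      have h1 := Rp_coeff_zero f i (k - 1); rw [h] at h1; simpa using h1.symm
    rw [h, h0, map_zero]
  | succ t ih =>
    intro m hm
    have h1 := ih (m + 1) (by omega)
    have h2 : X * Rp f i m = C ((f i (m + 1)).coeff 0) - f i (m + 1) := by
      rw [← h1, Rp_succ]; ring
    have h3 : (C ((f i (m + 1)).coeff 0) - f i (m + 1)).natDegree ≤ 1 :=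
      (natDegree_sub_le _ _).trans (by simp [hf])
    have h4 := const_of_X_mul h2 h3
    rw [h4, Rp_coeff_zero]

lemma f_eq_row {k : ℕ} {f : ℕ → ℕ → ℝ[X]} (hf : ∀ i j, (f i j).natDegree ≤ 1)
    (i : ℕ) (h : Rp f i (k - 1) = 0) :
    ∀ j, 1 ≤ j → j ≤ k - 1 →
      f i j = C ((f i j).coeff 0) - X * C ((f i (j - 1)).coeff 0) := by
  intro j h1 h2
  have e1 := Rp_const hf i h j h2
  have e2 := Rp_const hf i h (j - 1) (by omega)
  have e3 : Rp f i j = X * Rp f i (j - 1) + f i j := by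
    have := Rp_succ f i (j - 1)
    rwa [show j - 1 + 1 = j by omega] at this
  rw [e1, e2] at e3
  linear_combination -e3

lemma f_zero_row {k : ℕ} {f : ℕ → ℕ → ℝ[X]} (hf : ∀ i j, (f i j).natDegree ≤ 1)
    (i : ℕ) (h : Rp f i (k - 1) = 0) :
    f i 0 = C ((f i 0).coeff 0) := by
  have := Rp_const hf i h 0 (Nat.zero_le _)
  unfold Rp at this
  simpa using this

lemma f_top_row {k : ℕ} {f : ℕ → ℕ → ℝ[X]} (i : ℕ) (h : Rp f i (k - 1) = 0) :
    (f i (k - 1)).coeff 0 = 0 := by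
  have h1 := Rp_coeff_zero f i (k - 1); rw [h] at h1; simpa using h1.symm

section Combined

variable {k : ℕ} {f : ℕ → ℕ → ℝ[X]}

lemma antidiag (hf : ∀ i j, (f i j).natDegree ≤ 1)
    (HR : ∀ i, 1 ≤ i → i ≤ k - 1 → Rp f i (k - 1) = 0)
    (HC : ∀ j, 1 ≤ j → j ≤ k - 1 → Rp (fun a b => f b a) j (k - 1) = 0) :
    ∀ i j, 1 ≤ i → i ≤ k - 1 → 1 ≤ j → j ≤ k - 1 →
      (f i (j - 1)).coeff 0 = (f (i - 1) j).coeff 0 := by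
  intro i j hi1 hi2 hj1 hj2
  have hr := f_eq_row hf i (HR i hi1 hi2) j hj1 hj2
  have hc := f_eq_row (f := fun a b => f b a) (fun a b => hf b a) j (HC j hj1 hj2) i hi1 hi2
  have h4 := hr.symm.trans hc
  have h5 : X * C ((f i (j - 1)).coeff 0) = X * C ((f (i - 1) j).coeff 0) := by
    linear_combination -h4
  exact C_injective (mul_left_cancel₀ X_ne_zero h5)

lemma yzero (hk : 1 ≤ k) (hf : ∀ i j, (f i j).natDegree ≤ 1)
    (HR : ∀ i, 1 ≤ i → i ≤ k - 1 → Rp f i (k - 1) = 0)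
    (HC : ∀ j, 1 ≤ j → j ≤ k - 1 → Rp (fun a b => f b a) j (k - 1) = 0) :
    ∀ i j, i ≤ k - 1 → j ≤ k - 1 → k ≤ i + j → (f i j).coeff 0 = 0 := by
  suffices H : ∀ t i j, j + t = k - 1 → i ≤ k - 1 → k ≤ i + j → (f i j).coeff 0 = 0 by
    intro i j hi hj hk'; exact H (k - 1 - j) i j (by omega) hi hk'
  intro t
  induction t with
  | zero =>
    intro i j hj hi hk'
    have hj' : j = k - 1 := by omega
    subst hj'
    have hk2 : 1 ≤ k := by omega
    exact f_top_row i (HR i (by omega) hi)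
  | succ t ih =>
    intro i j hj hi hk'
    have h1 : (f i ((j + 1) - 1)).coeff 0 = (f (i - 1) (j + 1)).coeff 0 :=
      antidiag hf HR HC i (j + 1) (by omega) (by omega) (by omega) (by omega)
    simp only [Nat.add_sub_cancel] at h1
    rw [h1]
    exact ih (i - 1) (j + 1) (by omega) (by omega) (by omega)

lemma stride (hf : ∀ i j, (f i j).natDegree ≤ 1)
    (HR : ∀ i, 1 ≤ i → i ≤ k - 1 → Rp f i (k - 1) = 0)
    (HC : ∀ j, 1 ≤ j → j ≤ k - 1 → Rp (fun a b => f b a) j (k - 1) = 0) :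
    ∀ t i j, i + t ≤ k - 1 → j + t ≤ k - 1 →
      (f (i + t) j).coeff 0 = (f i (j + t)).coeff 0 := by
  intro t
  induction t with
  | zero => simp
  | succ t ih =>
    intro i j h1 h2
    have e1 : (f (i + t + 1) ((j + 1) - 1)).coeff 0 = (f (i + t + 1 - 1) (j + 1)).coeff 0 :=
      antidiag hf HR HC (i + t + 1) (j + 1) (by omega) (by omega) (by omega) (by omega)
    simp only [Nat.add_sub_cancel] at e1
    rw [show i + (t + 1) = i + t + 1 by omega, e1, ih i (j + 1) (by omega) (by omega),
      show j + 1 + t = j + (t + 1) by omega]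

end Combined

section Glem

variable {k : ℕ} {f : ℕ → ℕ → ℝ[X]} {Q : ℝ[X]}

lemma G2lem (hk : 2 ≤ k) (hf : ∀ i j, (f i j).natDegree ≤ 1)
    (HR : ∀ i, 1 ≤ i → i ≤ k - 1 → Rp f i (k - 1) = 0)
    (HC : ∀ j, 1 ≤ j → j ≤ k - 1 → Rp (fun a b => f b a) j (k - 1) = 0)
    {η : ℕ} (hη : η < k) :
    ∀ q, 1 ≤ q → q ≤ η →
      ∑ i ∈ range (η + 1), X ^ (η - i) * f i (k - 1 - η + q) = 0 := by
  intro q h1 h2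
  have hcol : Rp (fun a b => f b a) (k - 1 - η + q) η
      = C ((f η (k - 1 - η + q)).coeff 0) :=
    Rp_const (fun a b => hf b a) (k - 1 - η + q)
      (HC (k - 1 - η + q) (by omega) (by omega)) η (by omega)
  have hL : ∑ i ∈ range (η + 1), X ^ (η - i) * f i (k - 1 - η + q)
      = Rp (fun a b => f b a) (k - 1 - η + q) η :=
    Finset.sum_congr rfl fun i _ => mul_comm _ _
  rw [hL, hcol, yzero (by omega) hf HR HC η (k - 1 - η + q) (by omega) (by omega) (by omega),
    map_zero]

lemma G3lem (hk : 2 ≤ k) (hf : ∀ i j, (f i j).natDegree ≤ 1)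
    (HR : ∀ i, 1 ≤ i → i ≤ k - 1 → Rp f i (k - 1) = 0)
    (HC : ∀ j, 1 ≤ j → j ≤ k - 1 → Rp (fun a b => f b a) j (k - 1) = 0)
    {η : ℕ} (hη : η < k) :
    ∀ p, 1 ≤ p → p ≤ k - 1 - η →
      ∑ j ∈ range (k - 1 - η + 1), f (η + p) j * X ^ (k - 1 - η - j) = 0 := by
  intro p h1 h2
  have hrow : Rp f (η + p) (k - 1 - η) = C ((f (η + p) (k - 1 - η)).coeff 0) :=
    Rp_const hf (η + p) (HR (η + p) (by omega) (by omega)) (k - 1 - η) (by omega)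
  have : ∑ j ∈ range (k - 1 - η + 1), f (η + p) j * X ^ (k - 1 - η - j)
      = Rp f (η + p) (k - 1 - η) := rfl
  rw [this, hrow,
    yzero (by omega) hf HR HC (η + p) (k - 1 - η) (by omega) (by omega) (by omega), map_zero]

lemma G4lem (hk : 2 ≤ k) (hf : ∀ i j, (f i j).natDegree ≤ 1)
    (HR : ∀ i, 1 ≤ i → i ≤ k - 1 → Rp f i (k - 1) = 0)
    (HC : ∀ j, 1 ≤ j → j ≤ k - 1 → Rp (fun a b => f b a) j (k - 1) = 0)
    {η : ℕ} (hη : η < k) :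
    ∀ p q, 1 ≤ p → p ≤ k - 1 - η → 1 ≤ q → q ≤ η →
      f (η + p) (k - 1 - η + q) = 0 := by
  intro p q hp1 hp2 hq1 hq2
  have he := f_eq_row hf (η + p) (HR (η + p) (by omega) (by omega))
    (k - 1 - η + q) (by omega) (by omega)
  rw [he, yzero (by omega) hf HR HC (η + p) (k - 1 - η + q) (by omega) (by omega) (by omega),
    yzero (by omega) hf HR HC (η + p) (k - 1 - η + q - 1) (by omega) (by omega) (by omega)]
  simp

lemma G1lem (hk : 2 ≤ k) (hf : ∀ i j, (f i j).natDegree ≤ 1)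
    (HR0 : Rp f 0 (k - 1) = Q)
    (HR : ∀ i, 1 ≤ i → i ≤ k - 1 → Rp f i (k - 1) = 0)
    (HC0 : Rp (fun a b => f b a) 0 (k - 1) = Q)
    (HC : ∀ j, 1 ≤ j → j ≤ k - 1 → Rp (fun a b => f b a) j (k - 1) = 0)
    {η : ℕ} (hη : η < k) :
    ∑ j ∈ range (k - 1 - η + 1),
      (∑ i ∈ range (η + 1), X ^ (η - i) * f i j) * X ^ (k - 1 - η - j) = Q := by
  have hinner : ∀ j, (∑ i ∈ range (η + 1), X ^ (η - i) * f i j)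
      = Rp (fun a b => f b a) j η :=
    fun j => Finset.sum_congr rfl fun i _ => mul_comm _ _
  -- split HC0
  have hsplit : (∑ i ∈ range (η + 1), f i 0 * X ^ (k - 1 - i))
      + ∑ i ∈ range (k - 1 - η), f (η + 1 + i) 0 * X ^ (k - 1 - (η + 1 + i)) = Q := by
    rw [← HC0]
    unfold Rp
    have h1 : ∑ i ∈ range (k - 1 + 1), f i 0 * X ^ (k - 1 - i)
        = ∑ i ∈ Ico 0 (η + 1), f i 0 * X ^ (k - 1 - i)
          + ∑ i ∈ Ico (η + 1) (k - 1 + 1), f i 0 * X ^ (k - 1 - i) := by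
      rw [Finset.sum_Ico_consecutive _ (by omega) (by omega), ← Finset.range_eq_Ico]
    have h2 : ∑ i ∈ Ico (η + 1) (k - 1 + 1), f i 0 * X ^ (k - 1 - i)
        = ∑ i ∈ range (k - 1 - η), f (η + 1 + i) 0 * X ^ (k - 1 - (η + 1 + i)) := by
      rw [Finset.sum_Ico_eq_sum_range]
      have he : k - 1 + 1 - (η + 1) = k - 1 - η := by omega
      rw [he]
    simp only [← Finset.range_eq_Ico] at h1
    rw [h1, h2]
  -- first part
  have hfirst : ∑ i ∈ range (η + 1), f i 0 * X ^ (k - 1 - i)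
      = Rp (fun a b => f b a) 0 η * X ^ (k - 1 - η) := by
    rw [show Rp (fun a b => f b a) 0 η = ∑ i ∈ range (η + 1), f i 0 * X ^ (η - i) from rfl,
      Finset.sum_mul]
    refine Finset.sum_congr rfl fun i hi => ?_
    have hi' : i ≤ η := by simpa [Nat.lt_succ_iff] using hi
    rw [mul_assoc, ← pow_add, show η - i + (k - 1 - η) = k - 1 - i by omega]
  -- second part
  have hsecond : ∀ i ∈ range (k - 1 - η), f (η + 1 + i) 0 * X ^ (k - 1 - (η + 1 + i))
      = C ((f η (i + 1)).coeff 0) * X ^ ((k - 1 - η) - (i + 1)) := by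
    intro i hi
    have hi' : i < (k - 1 - η) := Finset.mem_range.mp hi
    have hr0 := f_zero_row hf (η + 1 + i) (HR (η + 1 + i) (by omega) (by omega))
    have hstr : (f (η + (i + 1)) 0).coeff 0 = (f η (0 + (i + 1))).coeff 0 :=
      stride hf HR HC (i + 1) η 0 (by omega) (by omega)
    rw [hr0, show η + 1 + i = η + (i + 1) by omega, hstr, Nat.zero_add,
      show k - 1 - (η + (i + 1)) = k - 1 - η - (i + 1) by omega]
  -- assemble
  have hcc : ∀ j ∈ range (k - 1 - η), Rp (fun a b => f b a) (j + 1) η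
      = C ((f η (j + 1)).coeff 0) := by
    intro j hj
    have hj' : j < (k - 1 - η) := Finset.mem_range.mp hj
    exact Rp_const (fun a b => hf b a) (j + 1) (HC (j + 1) (by omega) (by omega)) η (by omega)
  calc ∑ j ∈ range ((k - 1 - η) + 1), (∑ i ∈ range (η + 1), X ^ (η - i) * f i j) * X ^ ((k - 1 - η) - j)
      = ∑ j ∈ range ((k - 1 - η) + 1), Rp (fun a b => f b a) j η * X ^ ((k - 1 - η) - j) := by
        exact Finset.sum_congr rfl fun j _ => by rw [hinner]
    _ = (∑ j ∈ range (k - 1 - η), Rp (fun a b => f b a) (j + 1) η * X ^ ((k - 1 - η) - (j + 1)))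
        + Rp (fun a b => f b a) 0 η * X ^ ((k - 1 - η) - 0) := Finset.sum_range_succ' _ _
    _ = (∑ j ∈ range (k - 1 - η), C ((f η (j + 1)).coeff 0) * X ^ ((k - 1 - η) - (j + 1)))
        + Rp (fun a b => f b a) 0 η * X ^ (k - 1 - η) := by
        rw [Nat.sub_zero]
        congr 1
        exact Finset.sum_congr rfl fun j hj => by rw [hcc j hj]
    _ = Q := by
        rw [← hsplit, hfirst]
        rw [add_comm]
        congr 1
        exact (Finset.sum_congr rfl hsecond).symm

end Glem

lemma lemLead {k : ℕ} (hk : 1 ≤ k) {f : ℕ → ℕ → ℝ[X]}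
    (hf : ∀ i j, (f i j).natDegree ≤ 1) {Q : ℝ[X]} (h : Rp f 0 (k - 1) = Q) :
    Q.coeff k = (f 0 0).coeff 1 := by
  rw [← h]
  unfold Rp
  rw [finset_sum_coeff, Finset.sum_eq_single 0]
  · rw [coeff_mul_X_pow', if_pos (by omega), show k - (k - 1 - 0) = 1 by omega]
  · intro j hj hj0
    have hj' : j < k - 1 + 1 := Finset.mem_range.mp hj
    rw [coeff_mul_X_pow', if_pos (by omega), show k - (k - 1 - j) = j + 1 by omega]
    exact coeff_eq_zero_of_natDegree_lt (lt_of_le_of_lt (hf 0 j) (by omega))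
  · intro h'; exact absurd (Finset.mem_range.mpr (by omega)) h'

lemma coeffQ {k : ℕ} (α : ℝ) (g : ℕ → ℝ) :
    (C α * ∑ t ∈ range (k + 1), X ^ t * C (g t)).coeff k = α * g k := by
  rw [coeff_C_mul, finset_sum_coeff, Finset.sum_eq_single k]
  · rw [mul_comm (X ^ k) (C (g k)), coeff_C_mul, coeff_X_pow, if_pos rfl, mul_one]
  · intro t ht htk
    rw [mul_comm (X ^ t) (C (g t)), coeff_C_mul, coeff_X_pow, if_neg (Ne.symm htk), mul_zero]
  · intro h'; exact absurd (Finset.mem_range.mpr (by omega)) h'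
/-- Pencil entry as a total function on naturals. -/
def FN (n k : ℕ) (Lx Ly : Matrix (Fin k × Fin n) (Fin k × Fin n) ℝ) (a b : Fin n)
    (i j : ℕ) : ℝ[X] :=
  if h : i < k ∧ j < k then
    X * C (Lx (⟨i, h.1⟩, a) (⟨j, h.2⟩, b)) + C (Ly (⟨i, h.1⟩, a) (⟨j, h.2⟩, b))
  else 0

lemma FN_natDegree (n k : ℕ) (Lx Ly : Matrix (Fin k × Fin n) (Fin k × Fin n) ℝ)
    (a b : Fin n) (i j : ℕ) : (FN n k Lx Ly a b i j).natDegree ≤ 1 := by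
  unfold FN
  split
  · exact natDeg_pencil _ _
  · simp

lemma FN_fin (n k : ℕ) (Lx Ly : Matrix (Fin k × Fin n) (Fin k × Fin n) ℝ)
    (a b : Fin n) (i j : Fin k) :
    FN n k Lx Ly a b (i : ℕ) (j : ℕ) = pencilM Lx Ly (i, a) (j, b) := by
  unfold FN pencilM
  rw [dif_pos ⟨i.isLt, j.isLt⟩]
  simp [Matrix.of_apply]

def elN (η p i : ℕ) : ℝ[X] :=
  if p = 0 ∧ i ≤ η then X ^ (η - i) else if i = η + p then 1 else 0

def erN (k η q j : ℕ) : ℝ[X] :=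
  if q = 0 ∧ j ≤ k - 1 - η then X ^ (k - 1 - η - j) else if j = k - 1 - η + q then 1 else 0

lemma Eleft_apply (n k η : ℕ) (p : Fin (k - η)) (a : Fin n) (u : Fin k × Fin n) :
    Eleft n k η (p, a) u = if a = u.2 then elN η (p : ℕ) (u.1 : ℕ) else 0 := by
  rcases u with ⟨i, c⟩
  by_cases h : a = c
  · simp [Eleft, elN, h]
  · simp [Eleft, elN, h]

lemma Eright_apply (n k η : ℕ) (q : Fin (η + 1)) (b : Fin n) (u : Fin k × Fin n) :
    Eright n k η u (q, b) = if u.2 = b then erN k η (q : ℕ) (u.1 : ℕ) else 0 := by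
  rcases u with ⟨j, d⟩
  by_cases h : d = b
  · simp [Eright, erN, h]
  · simp [Eright, erN, h]

lemma lemA {k η : ℕ} (hη : η < k) (G : ℕ → ℝ[X]) (p : ℕ) (hp : p < k - η) :
    ∑ i ∈ range k, elN η p i * G i =
      if p = 0 then ∑ i ∈ range (η + 1), X ^ (η - i) * G i else G (η + p) := by
  by_cases hp0 : p = 0
  · subst hp0
    simp only [if_pos rfl]
    have he : ∀ i, elN η 0 i = if i ≤ η then X ^ (η - i) else 0 := by
      intro i
      by_cases h : i ≤ η
      · simp [elN, h]
      · simp [elN, h, show i ≠ η by omega]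
    calc ∑ i ∈ range k, elN η 0 i * G i
        = ∑ i ∈ range k, (if i ∈ range (η + 1) then X ^ (η - i) * G i else 0) := by
          refine Finset.sum_congr rfl fun i _ => ?_
          rw [he]
          by_cases h : i ≤ η
          · rw [if_pos h, if_pos (Finset.mem_range.mpr (by omega))]
          · rw [if_neg h, if_neg (by simp [Finset.mem_range]; omega), zero_mul]
      _ = ∑ i ∈ range k ∩ range (η + 1), X ^ (η - i) * G i := Finset.sum_ite_mem _ _ _
      _ = ∑ i ∈ range (η + 1), X ^ (η - i) * G i := by
          rw [Finset.inter_eq_right.mpr (Finset.range_subset_range.mpr (by omega))]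
  · simp only [if_neg hp0]
    have he : ∀ i, elN η p i = if i = η + p then 1 else 0 := by
      intro i; simp [elN, hp0]
    calc ∑ i ∈ range k, elN η p i * G i
        = ∑ i ∈ range k, (if i = η + p then G i else 0) := by
          refine Finset.sum_congr rfl fun i _ => ?_
          rw [he]
          by_cases h : i = η + p
          · rw [if_pos h, if_pos h, one_mul]
          · rw [if_neg h, if_neg h, zero_mul]
      _ = G (η + p) := by
          rw [Finset.sum_ite_eq', if_pos (Finset.mem_range.mpr (by omega))]

lemma lemB {k η : ℕ} (hη : η < k) (H : ℕ → ℝ[X]) (q : ℕ) (hq : q < η + 1) :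
    ∑ j ∈ range k, H j * erN k η q j =
      if q = 0 then ∑ j ∈ range (k - 1 - η + 1), H j * X ^ (k - 1 - η - j)
      else H (k - 1 - η + q) := by
  by_cases hq0 : q = 0
  · subst hq0
    simp only [if_pos rfl]
    have he : ∀ j, erN k η 0 j = if j ≤ k - 1 - η then X ^ (k - 1 - η - j) else 0 := by
      intro j
      by_cases h : j ≤ k - 1 - η
      · simp [erN, h]
      · simp [erN, h, show j ≠ k - 1 - η by omega]
    calc ∑ j ∈ range k, H j * erN k η 0 j
        = ∑ j ∈ range k, (if j ∈ range (k - 1 - η + 1) then H j * X ^ (k - 1 - η - j) else 0) := by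
          refine Finset.sum_congr rfl fun j _ => ?_
          rw [he]
          by_cases h : j ≤ k - 1 - η
          · rw [if_pos h, if_pos (Finset.mem_range.mpr (by omega))]
          · rw [if_neg h, if_neg (by simp [Finset.mem_range]; omega), mul_zero]
      _ = ∑ j ∈ range k ∩ range (k - 1 - η + 1), H j * X ^ (k - 1 - η - j) :=
          Finset.sum_ite_mem _ _ _
      _ = ∑ j ∈ range (k - 1 - η + 1), H j * X ^ (k - 1 - η - j) := by
          rw [Finset.inter_eq_right.mpr (Finset.range_subset_range.mpr (by omega))]
  · simp only [if_neg hq0]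
    have he : ∀ j, erN k η q j = if j = k - 1 - η + q then 1 else 0 := by
      intro j; simp [erN, hq0]
    calc ∑ j ∈ range k, H j * erN k η q j
        = ∑ j ∈ range k, (if j = k - 1 - η + q then H j else 0) := by
          refine Finset.sum_congr rfl fun j _ => ?_
          rw [he]
          by_cases h : j = k - 1 - η + q
          · rw [if_pos h, if_pos h, mul_one]
          · rw [if_neg h, if_neg h, mul_zero]
      _ = H (k - 1 - η + q) := by
          rw [Finset.sum_ite_eq', if_pos (Finset.mem_range.mpr (by omega))]

lemma entry_eq (n k η : ℕ) (hη : η < k)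
    (Lx Ly : Matrix (Fin k × Fin n) (Fin k × Fin n) ℝ)
    (p : Fin (k - η)) (q : Fin (η + 1)) (a b : Fin n) :
    (Eleft n k η * pencilM Lx Ly * Eright n k η) (p, a) (q, b) =
      if (p : ℕ) = 0 then
        (if (q : ℕ) = 0 then
          ∑ j ∈ range (k - 1 - η + 1),
            (∑ i ∈ range (η + 1), X ^ (η - i) * FN n k Lx Ly a b i j) * X ^ (k - 1 - η - j)
         else ∑ i ∈ range (η + 1), X ^ (η - i) * FN n k Lx Ly a b i (k - 1 - η + (q : ℕ)))
      else
        (if (q : ℕ) = 0 then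
          ∑ j ∈ range (k - 1 - η + 1), FN n k Lx Ly a b (η + (p : ℕ)) j * X ^ (k - 1 - η - j)
         else FN n k Lx Ly a b (η + (p : ℕ)) (k - 1 - η + (q : ℕ))) := by
  have step1 : (Eleft n k η * pencilM Lx Ly * Eright n k η) (p, a) (q, b) =
      ∑ j ∈ range k, (∑ i ∈ range k, elN η (p : ℕ) i * FN n k Lx Ly a b i j)
        * erN k η (q : ℕ) j := by
    rw [Matrix.mul_apply]
    simp only [Matrix.mul_apply]
    rw [Fintype.sum_prod_type]
    have hcol : ∀ (v : Fin k × Fin n),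
        (∑ u : Fin k × Fin n, Eleft n k η (p, a) u * pencilM Lx Ly u v)
          = ∑ i : Fin k, elN η (p : ℕ) (i : ℕ) * pencilM Lx Ly ((i, a)) v := by
      intro v
      rw [Fintype.sum_prod_type]
      refine Finset.sum_congr rfl fun i _ => ?_
      have : ∀ c : Fin n, Eleft n k η (p, a) (i, c) * pencilM Lx Ly (i, c) v
          = if a = c then elN η (p : ℕ) (i : ℕ) * pencilM Lx Ly (i, c) v else 0 := by
        intro c
        rw [Eleft_apply]
        by_cases h : a = c
        · rw [if_pos h, if_pos h]
        · rw [if_neg h, if_neg h, zero_mul]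
      calc ∑ c : Fin n, Eleft n k η (p, a) (i, c) * pencilM Lx Ly (i, c) v
          = ∑ c : Fin n, if a = c then elN η (p : ℕ) (i : ℕ) * pencilM Lx Ly (i, c) v else 0 :=
            Finset.sum_congr rfl fun c _ => this c
        _ = elN η (p : ℕ) (i : ℕ) * pencilM Lx Ly (i, a) v := by
            rw [Finset.sum_ite_eq, if_pos (Finset.mem_univ a)]
    have hrow : ∀ (j : Fin k),
        (∑ d : Fin n, (∑ i : Fin k, elN η (p : ℕ) (i : ℕ) * pencilM Lx Ly (i, a) (j, d))
          * Eright n k η (j, d) (q, b))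
        = (∑ i : Fin k, elN η (p : ℕ) (i : ℕ) * pencilM Lx Ly (i, a) (j, b))
            * erN k η (q : ℕ) (j : ℕ) := by
      intro j
      have : ∀ d : Fin n,
          (∑ i : Fin k, elN η (p : ℕ) (i : ℕ) * pencilM Lx Ly (i, a) (j, d))
            * Eright n k η (j, d) (q, b)
          = if d = b then
              (∑ i : Fin k, elN η (p : ℕ) (i : ℕ) * pencilM Lx Ly (i, a) (j, d))
                * erN k η (q : ℕ) (j : ℕ) else 0 := by
        intro d
        rw [Eright_apply]
        by_cases h : d = b
        · rw [if_pos h, if_pos h]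
        · rw [if_neg h, if_neg h, mul_zero]
      calc (∑ d : Fin n, (∑ i : Fin k, elN η (p : ℕ) (i : ℕ) * pencilM Lx Ly (i, a) (j, d))
              * Eright n k η (j, d) (q, b))
          = ∑ d : Fin n, if d = b then
              (∑ i : Fin k, elN η (p : ℕ) (i : ℕ) * pencilM Lx Ly (i, a) (j, d))
                * erN k η (q : ℕ) (j : ℕ) else 0 :=
            Finset.sum_congr rfl fun d _ => this d
        _ = (∑ i : Fin k, elN η (p : ℕ) (i : ℕ) * pencilM Lx Ly (i, a) (j, b))
              * erN k η (q : ℕ) (j : ℕ) := by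
            rw [Finset.sum_ite_eq', if_pos (Finset.mem_univ b)]
    calc ∑ v₁ : Fin k, ∑ v₂ : Fin n,
          (∑ u : Fin k × Fin n, Eleft n k η (p, a) u * pencilM Lx Ly u (v₁, v₂))
            * Eright n k η (v₁, v₂) (q, b)
        = ∑ j : Fin k, (∑ i : Fin k, elN η (p : ℕ) (i : ℕ) * pencilM Lx Ly (i, a) (j, b))
            * erN k η (q : ℕ) (j : ℕ) := by
          refine Finset.sum_congr rfl fun j _ => ?_
          rw [show (∑ v₂ : Fin n,
              (∑ u : Fin k × Fin n, Eleft n k η (p, a) u * pencilM Lx Ly u (j, v₂))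
                * Eright n k η (j, v₂) (q, b))
            = ∑ d : Fin n, (∑ i : Fin k, elN η (p : ℕ) (i : ℕ) * pencilM Lx Ly (i, a) (j, d))
                * Eright n k η (j, d) (q, b) from
            Finset.sum_congr rfl fun d _ => by rw [hcol (j, d)]]
          exact hrow j
      _ = ∑ j ∈ range k, (∑ i ∈ range k, elN η (p : ℕ) i * FN n k Lx Ly a b i j)
            * erN k η (q : ℕ) j := by
          have hin : ∀ j : Fin k,
              (∑ i : Fin k, elN η (p : ℕ) (i : ℕ) * pencilM Lx Ly (i, a) (j, b))
              = ∑ i ∈ range k, elN η (p : ℕ) i * FN n k Lx Ly a b i (j : ℕ) := by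
            intro j
            rw [← Fin.sum_univ_eq_sum_range (fun i => elN η (p : ℕ) i * FN n k Lx Ly a b i (j : ℕ)) k]
            exact Finset.sum_congr rfl fun i _ => by rw [FN_fin]
          rw [← Fin.sum_univ_eq_sum_range (fun j =>
            (∑ i ∈ range k, elN η (p : ℕ) i * FN n k Lx Ly a b i j) * erN k η (q : ℕ) j) k]
          exact Finset.sum_congr rfl fun j _ => by rw [hin]
  rw [step1, lemB hη _ (q : ℕ) q.isLt]
  have hA : ∀ j, (∑ i ∈ range k, elN η (p : ℕ) i * FN n k Lx Ly a b i j)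
      = if (p : ℕ) = 0 then ∑ i ∈ range (η + 1), X ^ (η - i) * FN n k Lx Ly a b i j
        else FN n k Lx Ly a b (η + (p : ℕ)) j :=
    fun j => lemA hη _ (p : ℕ) p.isLt
  simp only [hA]
  by_cases hp0 : (p : ℕ) = 0 <;> by_cases hq0 : (q : ℕ) = 0 <;> simp [hp0, hq0]
lemma Rp_rangek {k : ℕ} (hk1 : 1 ≤ k) (f : ℕ → ℕ → ℝ[X]) (i : ℕ) :
    Rp f i (k - 1) = ∑ j ∈ range k, f i j * X ^ (k - 1 - j) := by
  unfold Rp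
  rw [show k - 1 + 1 = k by omega]

lemma col_form (g : ℕ → ℕ → ℝ[X]) (j m : ℕ) :
    ∑ i ∈ range (m + 1), X ^ (m - i) * g i j = Rp (fun x y => g y x) j m :=
  Finset.sum_congr rfl fun i _ => mul_comm _ _

lemma mulLamI_apply (n k : ℕ) (Lx Ly : Matrix (Fin k × Fin n) (Fin k × Fin n) ℝ)
    (i : Fin k) (r : Fin 1) (a b : Fin n) :
    (pencilM Lx Ly * LamI n k) (i, a) (r, b)
      = ∑ j ∈ range k, FN n k Lx Ly a b (i : ℕ) j * X ^ (k - 1 - j) := by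
  rw [Matrix.mul_apply, Fintype.sum_prod_type]
  have hj : ∀ j : Fin k,
      (∑ d : Fin n, pencilM Lx Ly (i, a) (j, d) * LamI n k (j, d) (r, b))
      = FN n k Lx Ly a b (i : ℕ) (j : ℕ) * X ^ (k - 1 - (j : ℕ)) := by
    intro j
    have h1 : ∀ d : Fin n, pencilM Lx Ly (i, a) (j, d) * LamI n k (j, d) (r, b)
        = if d = b then pencilM Lx Ly (i, a) (j, d) * X ^ (k - 1 - (j : ℕ)) else 0 := by
      intro d
      by_cases h : d = b
      · simp [LamI, h]
      · simp [LamI, h]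
    rw [Finset.sum_congr rfl fun d _ => h1 d, Finset.sum_ite_eq', if_pos (Finset.mem_univ b),
      FN_fin]
  rw [Finset.sum_congr rfl fun j _ => hj j]
  exact Fin.sum_univ_eq_sum_range (fun j => FN n k Lx Ly a b (i : ℕ) j * X ^ (k - 1 - j)) k

lemma LamIT_mul_apply (n k : ℕ) (Lx Ly : Matrix (Fin k × Fin n) (Fin k × Fin n) ℝ)
    (r : Fin 1) (j : Fin k) (a b : Fin n) :
    (LamIT n k * pencilM Lx Ly) (r, a) (j, b)
      = ∑ i ∈ range k, X ^ (k - 1 - i) * FN n k Lx Ly a b i (j : ℕ) := by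
  rw [Matrix.mul_apply, Fintype.sum_prod_type]
  have hi : ∀ i : Fin k,
      (∑ c : Fin n, LamIT n k (r, a) (i, c) * pencilM Lx Ly (i, c) (j, b))
      = X ^ (k - 1 - (i : ℕ)) * FN n k Lx Ly a b (i : ℕ) (j : ℕ) := by
    intro i
    have h1 : ∀ c : Fin n, LamIT n k (r, a) (i, c) * pencilM Lx Ly (i, c) (j, b)
        = if a = c then X ^ (k - 1 - (i : ℕ)) * pencilM Lx Ly (i, c) (j, b) else 0 := by
      intro c
      by_cases h : a = c
      · simp [LamIT, h]
      · simp [LamIT, h]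
    rw [Finset.sum_congr rfl fun c _ => h1 c, Finset.sum_ite_eq, if_pos (Finset.mem_univ a),
      FN_fin]
  rw [Finset.sum_congr rfl fun i _ => hi i]
  exact Fin.sum_univ_eq_sum_range (fun i => X ^ (k - 1 - i) * FN n k Lx Ly a b i (j : ℕ)) k

section Extract

variable {n k : ℕ} {Lx Ly : Matrix (Fin k × Fin n) (Fin k × Fin n) ℝ}
  {Pc : ℕ → Matrix (Fin n) (Fin n) ℝ}

lemma extract_row0 (hk : 2 ≤ k) (α : ℝ)
    (h : Eleft n k 0 * pencilM Lx Ly * Eright n k 0 = GRHS n k 0 α (polyOf n n k Pc))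
    (a b : Fin n) :
    Rp (FN n k Lx Ly a b) 0 (k - 1)
      = C α * ∑ t ∈ range (k + 1), X ^ t * C (Pc t a b) := by
  have e := congrFun (congrFun h ((⟨0, by omega⟩ : Fin (k - 0)), a))
    ((⟨0, by omega⟩ : Fin (0 + 1)), b)
  rw [entry_eq n k 0 (by omega) Lx Ly _ _ a b] at e
  simp only [GRHS, Matrix.of_apply, Nat.sub_zero, Nat.zero_add, zero_add,
    Finset.sum_range_one, Nat.sub_self, pow_zero, one_mul, and_self, if_true,
    eq_self_iff_true] at e
  exact e

lemma extract_row (hk : 2 ≤ k) (α : ℝ)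
    (h : Eleft n k 0 * pencilM Lx Ly * Eright n k 0 = GRHS n k 0 α (polyOf n n k Pc))
    (a b : Fin n) (i : ℕ) (hi1 : 1 ≤ i) (hi2 : i ≤ k - 1) :
    Rp (FN n k Lx Ly a b) i (k - 1) = 0 := by
  have e := congrFun (congrFun h ((⟨i, by omega⟩ : Fin (k - 0)), a))
    ((⟨0, by omega⟩ : Fin (0 + 1)), b)
  rw [entry_eq n k 0 (by omega) Lx Ly _ _ a b] at e
  simp only [GRHS, Matrix.of_apply, Nat.sub_zero, Nat.zero_add, and_true, eq_self_iff_true,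
    if_true, show i ≠ 0 by omega, if_false, and_false, false_and, ite_eq_right_iff] at e
  exact e

lemma extract_col0 (hk : 2 ≤ k) (α : ℝ)
    (h : Eleft n k (k - 1) * pencilM Lx Ly * Eright n k (k - 1)
        = GRHS n k (k - 1) α (polyOf n n k Pc))
    (a b : Fin n) :
    Rp (fun x y => FN n k Lx Ly a b y x) 0 (k - 1)
      = C α * ∑ t ∈ range (k + 1), X ^ t * C (Pc t a b) := by
  have e := congrFun (congrFun h ((⟨0, by omega⟩ : Fin (k - (k - 1))), a))
    ((⟨0, by omega⟩ : Fin ((k - 1) + 1)), b)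
  rw [entry_eq n k (k - 1) (by omega) Lx Ly _ _ a b] at e
  simp only [GRHS, Matrix.of_apply, Nat.sub_self, Nat.zero_add, zero_add,
    Finset.sum_range_one, Nat.sub_zero, pow_zero, mul_one, and_self, if_true,
    eq_self_iff_true] at e
  rw [col_form (FN n k Lx Ly a b) 0 (k - 1)] at e
  exact e

lemma extract_col (hk : 2 ≤ k) (α : ℝ)
    (h : Eleft n k (k - 1) * pencilM Lx Ly * Eright n k (k - 1)
        = GRHS n k (k - 1) α (polyOf n n k Pc))
    (a b : Fin n) (j : ℕ) (hj1 : 1 ≤ j) (hj2 : j ≤ k - 1) :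
    Rp (fun x y => FN n k Lx Ly a b y x) j (k - 1) = 0 := by
  have e := congrFun (congrFun h ((⟨0, by omega⟩ : Fin (k - (k - 1))), a))
    ((⟨j, by omega⟩ : Fin ((k - 1) + 1)), b)
  rw [entry_eq n k (k - 1) (by omega) Lx Ly _ _ a b] at e
  simp only [GRHS, Matrix.of_apply, Nat.sub_self, Nat.zero_add, zero_add, eq_self_iff_true,
    if_true, show j ≠ 0 by omega, if_false, and_false, true_and, false_and] at e
  rw [col_form (FN n k Lx Ly a b) j (k - 1)] at e
  exact e

lemma build_memG (hk : 2 ≤ k) (η : ℕ) (hη : η < k) (α : ℝ)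
    (HR0 : ∀ a b : Fin n, Rp (FN n k Lx Ly a b) 0 (k - 1)
      = C α * ∑ t ∈ range (k + 1), X ^ t * C (Pc t a b))
    (HR : ∀ (a b : Fin n) i, 1 ≤ i → i ≤ k - 1 → Rp (FN n k Lx Ly a b) i (k - 1) = 0)
    (HC0 : ∀ a b : Fin n, Rp (fun x y => FN n k Lx Ly a b y x) 0 (k - 1)
      = C α * ∑ t ∈ range (k + 1), X ^ t * C (Pc t a b))
    (HC : ∀ (a b : Fin n) j, 1 ≤ j → j ≤ k - 1 →
      Rp (fun x y => FN n k Lx Ly a b y x) j (k - 1) = 0) :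
    Eleft n k η * pencilM Lx Ly * Eright n k η = GRHS n k η α (polyOf n n k Pc) := by
  refine Matrix.ext fun u v => ?_
  obtain ⟨p, a⟩ := u
  obtain ⟨q, b⟩ := v
  rw [entry_eq n k η hη Lx Ly p q a b]
  rw [show GRHS n k η α (polyOf n n k Pc) (p, a) (q, b)
    = if (p : ℕ) = 0 ∧ (q : ℕ) = 0 then
        C α * ∑ t ∈ range (k + 1), X ^ t * C (Pc t a b) else 0 from rfl]
  have hf := FN_natDegree n k Lx Ly a b
  by_cases hp : (p : ℕ) = 0 <;> by_cases hq : (q : ℕ) = 0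
  · rw [if_pos hp, if_pos hq, if_pos ⟨hp, hq⟩]
    exact G1lem hk hf (HR0 a b) (HR a b) (HC0 a b) (HC a b) hη
  · rw [if_pos hp, if_neg hq, if_neg (by exact fun h => hq h.2)]
    exact G2lem hk hf (HR a b) (HC a b) hη (q : ℕ) (by omega) (by have := q.isLt; omega)
  · rw [if_neg hp, if_pos hq, if_neg (by exact fun h => hp h.1)]
    exact G3lem hk hf (HR a b) (HC a b) hη (p : ℕ) (by omega) (by have := p.isLt; omega)
  · rw [if_neg hp, if_neg hq, if_neg (by exact fun h => hp h.1)]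
    exact G4lem hk hf (HR a b) (HC a b) hη (p : ℕ) (q : ℕ) (by omega)
      (by have := p.isLt; omega) (by omega) (by have := q.isLt; omega)

end Extract

end Stmt19Helper

open Stmt19Helper Finset in
theorem stmt19 (n k : ℕ) (hk : 2 ≤ k)
    (Pc : ℕ → Matrix (Fin n) (Fin n) ℝ) (hdeg : Pc k ≠ 0)
    (Lx Ly : Matrix (Fin k × Fin n) (Fin k × Fin n) ℝ) :
    (∀ η : ℕ, η < k → memG n k η Pc (Lx, Ly)) ↔
    (∃ α : ℝ,
      pencilM Lx Ly * LamI n k =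
        Matrix.of (fun p q =>
          if (p.1 : ℕ) = 0 then C α * polyOf n n k Pc p.2 q.2 else 0) ∧
      LamIT n k * pencilM Lx Ly =
        Matrix.of (fun p q =>
          if (q.1 : ℕ) = 0 then C α * polyOf n n k Pc p.2 q.2 else 0)) := by
  have hk1 : 1 ≤ k := by omega
  constructor
  · intro hG
    obtain ⟨α₀, h0⟩ := hG 0 (by omega)
    obtain ⟨α₁, h1⟩ := hG (k - 1) (by omega)
    have h0' : Eleft n k 0 * pencilM Lx Ly * Eright n k 0
        = GRHS n k 0 α₀ (polyOf n n k Pc) := h0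
    have h1' : Eleft n k (k - 1) * pencilM Lx Ly * Eright n k (k - 1)
        = GRHS n k (k - 1) α₁ (polyOf n n k Pc) := h1
    -- identify the ansatz constants
    have hab : ∃ a b : Fin n, Pc k a b ≠ 0 := by
      by_contra hcon
      push_neg at hcon
      exact hdeg (by ext a b; simpa using hcon a b)
    obtain ⟨a₀, b₀, hPk⟩ := hab
    have hf0 := FN_natDegree n k Lx Ly a₀ b₀
    have lead0 := lemLead hk1 hf0 (extract_row0 hk α₀ h0' a₀ b₀)
    have lead1 := lemLead hk1 (fun i j => hf0 j i) (extract_col0 hk α₁ h1' a₀ b₀)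
    rw [coeffQ] at lead0 lead1
    have hαeq : α₁ = α₀ := by
      have : α₀ * Pc k a₀ b₀ = α₁ * Pc k a₀ b₀ := by rw [lead0, lead1]
      exact (mul_right_cancel₀ hPk this).symm
    refine ⟨α₀, ?_, ?_⟩
    · refine Matrix.ext fun u v => ?_
      obtain ⟨i, a⟩ := u
      obtain ⟨r, b⟩ := v
      rw [mulLamI_apply n k Lx Ly i r a b, Matrix.of_apply, ← Rp_rangek hk1]
      by_cases hi : (i : ℕ) = 0
      · rw [if_pos hi, hi]
        exact extract_row0 hk α₀ h0' a b
      · rw [if_neg hi]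
        exact extract_row hk α₀ h0' a b (i : ℕ) (by omega) (by have := i.isLt; omega)
    · refine Matrix.ext fun u v => ?_
      obtain ⟨r, a⟩ := u
      obtain ⟨j, b⟩ := v
      rw [LamIT_mul_apply n k Lx Ly r j a b, Matrix.of_apply,
        show (∑ i ∈ range k, X ^ (k - 1 - i) * FN n k Lx Ly a b i (j : ℕ))
          = Rp (fun x y => FN n k Lx Ly a b y x) (j : ℕ) (k - 1) by
            rw [← col_form, show k - 1 + 1 = k by omega]]
      by_cases hj : (j : ℕ) = 0
      · rw [if_pos hj, hj, ← hαeq]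
        exact extract_col0 hk α₁ h1' a b
      · rw [if_neg hj]
        exact extract_col hk α₁ h1' a b (j : ℕ) (by omega) (by have := j.isLt; omega)
  · rintro ⟨α, he1, he2⟩ η hη
    have HR0 : ∀ a b : Fin n, Rp (FN n k Lx Ly a b) 0 (k - 1)
        = C α * ∑ t ∈ range (k + 1), X ^ t * C (Pc t a b) := by
      intro a b
      have e := congrFun (congrFun he1 ((⟨0, by omega⟩ : Fin k), a))
        ((⟨0, by omega⟩ : Fin 1), b)
      rw [mulLamI_apply] at e
      rw [Rp_rangek hk1]
      simpa [polyOf] using e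
    have HR : ∀ (a b : Fin n) i, 1 ≤ i → i ≤ k - 1 →
        Rp (FN n k Lx Ly a b) i (k - 1) = 0 := by
      intro a b i h1 h2
      have e := congrFun (congrFun he1 ((⟨i, by omega⟩ : Fin k), a))
        ((⟨0, by omega⟩ : Fin 1), b)
      rw [mulLamI_apply] at e
      rw [Rp_rangek hk1]
      simpa [show i ≠ 0 by omega] using e
    have HC0 : ∀ a b : Fin n, Rp (fun x y => FN n k Lx Ly a b y x) 0 (k - 1)
        = C α * ∑ t ∈ range (k + 1), X ^ t * C (Pc t a b) := by
      intro a b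
      have e := congrFun (congrFun he2 ((⟨0, by omega⟩ : Fin 1), a))
        ((⟨0, by omega⟩ : Fin k), b)
      rw [LamIT_mul_apply] at e
      rw [← col_form (FN n k Lx Ly a b) 0 (k - 1), show k - 1 + 1 = k by omega]
      simpa [polyOf] using e
    have HC : ∀ (a b : Fin n) j, 1 ≤ j → j ≤ k - 1 →
        Rp (fun x y => FN n k Lx Ly a b y x) j (k - 1) = 0 := by
      intro a b j h1 h2
      have e := congrFun (congrFun he2 ((⟨0, by omega⟩ : Fin 1), a))
        ((⟨j, by omega⟩ : Fin k), b)
      rw [LamIT_mul_apply] at e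
      rw [← col_form (FN n k Lx Ly a b) j (k - 1), show k - 1 + 1 = k by omega]
      simpa [show j ≠ 0 by omega] using e
    exact ⟨α, build_memG hk η hη α HR0 HR HC0 HC⟩
end
end
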